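/- arXiv:0708.1901 — 3 statements merged into one kernel-verified Lean document; each statement's English description precedes it below -/
import Mathlib

section
/- For every integer m ≥ 1, every integer m_η with 0 ≤ m_η < m, every N ∈ ℕ and all constants c₀, c₁, λ > 0 and γ > m − m_η, there exists B₀ > 0 with the following property: for every design problem (𝒳, ℬ, f, ℓ, (ξ[β])_{β∈ℬ}) as in the context satisfying conditions (2.4/3.1) with constants c₁, γ, (2.5) with constant λ, and (2.9) with constant c₀, and such that in addition every local D-optimal design ξ[β] is supported at exactly m points each carrying weight 1/m, and there exist fixed points x̄₁,…,x̄_{m_η} ∈ 𝒳 belonging to the support of every ξ[β] (β ∈ ℬ), the following holds: if ℓ(β_max) − ℓ(β_min) ≥ B₀, then every design ξ* maximizing the standardized maximin D-criterion Φ over all designs is supported at more than N points. -/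
open scoped BigOperators

/-- An approximate design: a finitely supported probability measure on `X`,
given by its support points and positive weights summing to one. -/
structure Design (X : Type*) where
  support : Finset X
  w : X → ℝ
  w_pos : ∀ x ∈ support, 0 < w x
  w_zero : ∀ x ∉ support, w x = 0
  sum_one : ∑ x ∈ support, w x = 1

/-- Information matrix `M(ξ,β) = ∑ₖ wₖ f(xₖ,β) f(xₖ,β)ᵀ`. -/
noncomputable def infoMat {X : Type*} {m : ℕ} (f : X → ℝ → Fin m → ℝ)
    (ξ : Design X) (β : ℝ) : Matrix (Fin m) (Fin m) ℝ :=
  ∑ x ∈ ξ.support, ξ.w x • Matrix.vecMulVec (f x β) (f x β)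

/-- `I_m(x₁,…,x_m,β) = det[f(x₁,β) ⋯ f(x_m,β)]²`. -/
noncomputable def detIm {X : Type*} {m : ℕ} (f : X → ℝ → Fin m → ℝ)
    (xs : Fin m → X) (β : ℝ) : ℝ :=
  (Matrix.det (Matrix.of fun i j => f (xs j) β i)) ^ 2

/-!
By Cauchy–Binet, `det M(ξ,β)` is a nonnegative combination of the `I_m` of `m`-tuples of
support points of `ξ`, so by (2.9) a design with at most `N` support points is only good near
the at most `T = N^m m` parameters `β̃` attached to its tuples. Some `β` has `ℓ(β)` at distance
`ρ = B / (2(T+1))` from all their scale values, `B = ℓ(β_max) - ℓ(β_min)`, and there (2.4) gives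
efficiency at most `c₀ c₁ T ρ^{-γ}`. On the other hand the uniform mixture of the local optima
on a `λ`-net of the scale has efficiency at least `(1/2) (⌊B/λ⌋ + 1)^{-(m - m_η)}` by (2.5):
the `m_η` common support points keep their full weight `1/m` in the mixture, and only the other
`m - m_η` points of each local optimum lose the factor `⌊B/λ⌋ + 1`. As `γ > m - m_η`, the upper
bound falls below the lower one for large `B`.
-/

open Finset Matrix
open scoped Nat

namespace Matrix

open Equiv

variable {R X : Type*} [CommRing R] {m : ℕ} (s : Finset X) (w : X → R) (v : X → Fin m → R)

theorem det_sum_smul_vecMulVec_eq_sum_prod_mul_det :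
    (∑ x ∈ s, w x • vecMulVec (v x) (v x)).det =
      ∑ r ∈ Fintype.piFinset fun _ => s,
        (∏ i, w (r i) * v (r i) i) * (of fun i j => v (r i) j).det := by
  have hrows :
      ∑ x ∈ s, w x • vecMulVec (v x) (v x) = fun i => ∑ x ∈ s, (w x * v x i) • v x := by
    ext i j
    simp [Matrix.sum_apply, vecMulVec_apply, Finset.sum_apply, mul_assoc]
  rw [hrows]
  change detRowAlternating _ = _
  rw [← AlternatingMap.coe_multilinearMap, MultilinearMap.map_sum_finset]
  refine sum_congr rfl fun r _ => ?_
  rw [MultilinearMap.map_smul_univ, smul_eq_mul]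
  rfl

/-- Averaging the multilinear expansion over the reorderings `r ∘ σ` of each tuple turns the
factor `∏ i, v (r i) i` into `det (v ∘ r)`. -/
theorem factorial_mul_det_sum_smul_vecMulVec :
    (m ! : R) * (∑ x ∈ s, w x • vecMulVec (v x) (v x)).det =
      ∑ r ∈ Fintype.piFinset fun _ => s, (∏ i, w (r i)) * (of fun i j => v (r i) j).det ^ 2 := by
  have hperm : ∀ σ : Perm (Fin m), ∀ r : Fin m → X,
      (∏ i, w (r (σ i)) * v (r (σ i)) i) * (of fun i j => v (r (σ i)) j).det =
        (∏ i, w (r i)) * (of fun i j => v (r i) j).det * (Perm.sign σ * ∏ i, v (r (σ i)) i) := by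
    intro σ r
    rw [prod_mul_distrib, Equiv.prod_comp σ (fun i => w (r i)),
      show (of fun i j => v (r (σ i)) j) = (of fun i j => v (r i) j).submatrix σ id from rfl,
      det_permute]
    ring
  calc (m ! : R) * (∑ x ∈ s, w x • vecMulVec (v x) (v x)).det
      = ∑ σ : Perm (Fin m), ∑ r ∈ Fintype.piFinset fun _ => s,
          (∏ i, w (r (σ i)) * v (r (σ i)) i) * (of fun i j => v (r (σ i)) j).det := by
        have hcard : (m ! : R) = ∑ _σ : Perm (Fin m), 1 := by simp [Fintype.card_perm]
        rw [hcard, sum_mul]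
        refine sum_congr rfl fun σ _ => ?_
        rw [one_mul, det_sum_smul_vecMulVec_eq_sum_prod_mul_det]
        refine sum_nbij' (· ∘ σ.symm) (· ∘ σ) ?_ ?_ (fun r _ => by ext; simp)
          (fun r _ => by ext; simp) fun r _ => by simp
        all_goals
          intro r hr
          simp only [Fintype.mem_piFinset, Function.comp_apply] at hr ⊢
          exact fun i => hr _
    _ = ∑ r ∈ Fintype.piFinset fun _ => s, (∏ i, w (r i)) * (of fun i j => v (r i) j).det *
          ∑ σ : Perm (Fin m), Perm.sign σ * ∏ i, v (r (σ i)) i := by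
        rw [sum_comm]
        simp only [hperm, mul_sum]
    _ = _ := by
        refine sum_congr rfl fun r _ => ?_
        have hdet : ∑ σ : Perm (Fin m), (Perm.sign σ : R) * ∏ i, v (r (σ i)) i =
            (of fun i j => v (r i) j).det := (det_apply' (of fun i j => v (r i) j)).symm
        rw [hdet]
        ring

theorem det_sum_mul_smul_vecMulVec_of_card_eq [IsDomain R] [CharZero R] (c : X → R)
    (hs : s.card = m) :
    (∑ x ∈ s, (c x * w x) • vecMulVec (v x) (v x)).det =
      (∏ x ∈ s, c x) * (∑ x ∈ s, w x • vecMulVec (v x) (v x)).det := by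
  classical
  refine mul_left_cancel₀ (Nat.cast_ne_zero.mpr m.factorial_ne_zero) ?_
  rw [mul_left_comm, factorial_mul_det_sum_smul_vecMulVec, factorial_mul_det_sum_smul_vecMulVec,
    mul_sum]
  refine sum_congr rfl fun r hr => ?_
  by_cases hinj : Function.Injective r
  · have himage : univ.image r = s := by
      refine eq_of_subset_of_card_le (fun x hx => ?_) ?_
      · obtain ⟨i, -, rfl⟩ := mem_image.mp hx
        exact Fintype.mem_piFinset.mp hr i
      · rw [card_image_of_injective _ hinj, card_univ, Fintype.card_fin, hs]
    rw [prod_mul_distrib, ← himage, prod_image fun i _ j _ h => hinj h]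
    ring
  · obtain ⟨i, j, hij, hne⟩ := Function.not_injective_iff.mp hinj
    rw [det_zero_of_row_eq hne (by ext k; simp [hij])]
    ring

variable [LinearOrder R] [IsStrictOrderedRing R]

theorem det_sum_smul_vecMulVec_nonneg (hw : ∀ x ∈ s, 0 ≤ w x) :
    0 ≤ (∑ x ∈ s, w x • vecMulVec (v x) (v x)).det := by
  refine (mul_nonneg_iff_of_pos_left (Nat.cast_pos.mpr m.factorial_pos)).mp ?_
  rw [factorial_mul_det_sum_smul_vecMulVec]
  exact sum_nonneg fun r hr => mul_nonneg
    (prod_nonneg fun i _ => hw _ (Fintype.mem_piFinset.mp hr i)) (sq_nonneg _)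

theorem det_sum_smul_vecMulVec_le_of_subset {t : Finset X} {w' : X → R} (hts : t ⊆ s)
    (hw : ∀ x ∈ t, 0 ≤ w x) (hww' : ∀ x ∈ t, w x ≤ w' x) (hw' : ∀ x ∈ s, 0 ≤ w' x) :
    (∑ x ∈ t, w x • vecMulVec (v x) (v x)).det ≤
      (∑ x ∈ s, w' x • vecMulVec (v x) (v x)).det := by
  refine le_of_mul_le_mul_left ?_ (Nat.cast_pos.mpr m.factorial_pos)
  rw [factorial_mul_det_sum_smul_vecMulVec, factorial_mul_det_sum_smul_vecMulVec]
  calc ∑ r ∈ Fintype.piFinset fun _ => t, (∏ i, w (r i)) * (of fun i j => v (r i) j).det ^ 2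
      ≤ ∑ r ∈ Fintype.piFinset fun _ => t, (∏ i, w' (r i)) * (of fun i j => v (r i) j).det ^ 2 :=
        sum_le_sum fun r hr => mul_le_mul_of_nonneg_right (prod_le_prod
          (fun i _ => hw _ (Fintype.mem_piFinset.mp hr i))
          (fun i _ => hww' _ (Fintype.mem_piFinset.mp hr i))) (sq_nonneg _)
    _ ≤ _ := sum_le_sum_of_subset_of_nonneg (Fintype.piFinset_subset _ _ fun _ => hts)
        fun r hr _ => mul_nonneg
          (prod_nonneg fun i _ => hw' _ (Fintype.mem_piFinset.mp hr i)) (sq_nonneg _)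

theorem det_sum_smul_vecMulVec_le_sum_sq_det (hw : ∀ x ∈ s, 0 ≤ w x) (hw₁ : ∀ x ∈ s, w x ≤ 1) :
    (∑ x ∈ s, w x • vecMulVec (v x) (v x)).det ≤
      ∑ r ∈ Fintype.piFinset fun _ => s, (of fun i j => v (r i) j).det ^ 2 := by
  calc (∑ x ∈ s, w x • vecMulVec (v x) (v x)).det
      ≤ (m ! : R) * (∑ x ∈ s, w x • vecMulVec (v x) (v x)).det :=
        le_mul_of_one_le_left (det_sum_smul_vecMulVec_nonneg s w v hw)
          (Nat.one_le_cast.mpr m.factorial_pos)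
    _ = _ := factorial_mul_det_sum_smul_vecMulVec s w v
    _ ≤ _ := sum_le_sum fun r hr => mul_le_of_le_one_left (sq_nonneg _)
        (prod_le_one (fun i _ => hw _ (Fintype.mem_piFinset.mp hr i))
          fun i _ => hw₁ _ (Fintype.mem_piFinset.mp hr i))

end Matrix

namespace Design

variable {X : Type*}

theorem w_nonneg (ξ : Design X) (x : X) : 0 ≤ ξ.w x := by
  by_cases hx : x ∈ ξ.support
  · exact (ξ.w_pos x hx).le
  · exact (ξ.w_zero x hx).ge

theorem w_le_one (ξ : Design X) (x : X) : ξ.w x ≤ 1 := by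
  by_cases hx : x ∈ ξ.support
  · exact ξ.sum_one ▸ single_le_sum (fun y _ => ξ.w_nonneg y) hx
  · exact (ξ.w_zero x hx).trans_le zero_le_one

variable [DecidableEq X] {ι : Type*} [Fintype ι] [Nonempty ι]

noncomputable def avg (ξ : ι → Design X) : Design X where
  support := univ.biUnion fun j => (ξ j).support
  w x := (∑ j, (ξ j).w x) / Fintype.card ι
  w_pos x hx := by
    obtain ⟨k, -, hk⟩ := mem_biUnion.mp hx
    exact div_pos (sum_pos' (fun j _ => (ξ j).w_nonneg x) ⟨k, mem_univ k, (ξ k).w_pos x hk⟩)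
      (Nat.cast_pos.mpr Fintype.card_pos)
  w_zero x hx := by
    rw [sum_eq_zero fun j _ => (ξ j).w_zero x fun h => hx (mem_biUnion.mpr ⟨j, mem_univ j, h⟩),
      zero_div]
  sum_one := by
    rw [← sum_div, sum_comm]
    have hsum : ∀ j, ∑ x ∈ univ.biUnion (fun j => (ξ j).support), (ξ j).w x = 1 := fun j =>
      (ξ j).sum_one ▸ (sum_subset (subset_biUnion_of_mem _ (mem_univ j))
        fun x _ hx => (ξ j).w_zero x hx).symm
    rw [sum_congr rfl fun j _ => hsum j, sum_const, card_univ, nsmul_one,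
      div_self (Nat.cast_ne_zero.mpr Fintype.card_ne_zero)]

theorem support_subset_avg_support (ξ : ι → Design X) (k : ι) :
    (ξ k).support ⊆ (avg ξ).support :=
  subset_biUnion_of_mem (fun j => (ξ j).support) (mem_univ k)

theorem w_div_card_le_avg_w (ξ : ι → Design X) (k : ι) (x : X) :
    (ξ k).w x / Fintype.card ι ≤ (avg ξ).w x :=
  div_le_div_of_nonneg_right (single_le_sum (fun j _ => (ξ j).w_nonneg x) (mem_univ k))
    (Nat.cast_nonneg _)

theorem avg_w_of_forall_w_eq (ξ : ι → Design X) (k : ι) {x : X}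
    (hx : ∀ j, (ξ j).w x = (ξ k).w x) : (avg ξ).w x = (ξ k).w x := by
  change (∑ j, (ξ j).w x) / Fintype.card ι = _
  rw [sum_congr rfl fun j _ => hx j, sum_const, card_univ, nsmul_eq_mul,
    mul_div_cancel_left₀ _ (Nat.cast_ne_zero.mpr Fintype.card_ne_zero)]

end Design

section InfoMat

variable {X : Type*} {m : ℕ} (f : X → ℝ → Fin m → ℝ)

theorem detIm_eq_det_sq (xs : Fin m → X) (β : ℝ) :
    detIm f xs β = (of fun i j => f (xs i) β j).det ^ 2 := by
  rw [detIm, ← det_transpose]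
  rfl

theorem det_infoMat_nonneg (ξ : Design X) (β : ℝ) : 0 ≤ (infoMat f ξ β).det :=
  det_sum_smul_vecMulVec_nonneg _ _ _ fun x _ => ξ.w_nonneg x

theorem det_infoMat_le_sum_detIm (ξ : Design X) (β : ℝ) :
    (infoMat f ξ β).det ≤ ∑ r ∈ Fintype.piFinset fun _ => ξ.support, detIm f r β := by
  simp only [detIm_eq_det_sq]
  exact det_sum_smul_vecMulVec_le_sum_sq_det _ _ _ (fun x _ => ξ.w_nonneg x)
    fun x _ => ξ.w_le_one x

theorem det_infoMat_avg_ge [DecidableEq X] {ι : Type*} [Fintype ι] [Nonempty ι]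
    (ξ : ι → Design X) (k : ι) (P : Finset X) (hcard : (ξ k).support.card = m)
    (hP : P ⊆ (ξ k).support) (hPw : ∀ x ∈ P, ∀ j, (ξ j).w x = (ξ k).w x) (β : ℝ) :
    (1 / Fintype.card ι : ℝ) ^ (m - P.card) * (infoMat f (ξ k) β).det ≤
      (infoMat f (Design.avg ξ) β).det := by
  set c : X → ℝ := fun x => if x ∈ P then 1 else 1 / Fintype.card ι
  have hc : ∏ x ∈ (ξ k).support, c x = (1 / Fintype.card ι : ℝ) ^ (m - P.card) := by
    rw [prod_ite, prod_const_one, one_mul, prod_const, filter_notMem_eq_sdiff,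
      card_sdiff_of_subset hP, hcard]
  have hcw : ∀ x ∈ (ξ k).support, c x * (ξ k).w x ≤ (Design.avg ξ).w x := by
    intro x _
    by_cases hx : x ∈ P
    · simp only [c, if_pos hx, one_mul]
      exact (Design.avg_w_of_forall_w_eq ξ k (hPw x hx)).ge
    · simp only [c, if_neg hx, one_div_mul_eq_div]
      exact Design.w_div_card_le_avg_w ξ k x
  rw [← hc, infoMat, ← det_sum_mul_smul_vecMulVec_of_card_eq _ _ _ c hcard]
  exact det_sum_smul_vecMulVec_le_of_subset _ _ _ (Design.support_subset_avg_support ξ k)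
    (fun x _ => mul_nonneg (by simp only [c]; positivity) ((ξ k).w_nonneg x)) hcw
    fun x _ => (Design.avg ξ).w_nonneg x

end InfoMat

section Real

open Set Filter MeasureTheory

theorem exists_le_floor_div_abs_sub_mul_le {y B lam : ℝ} (hlam : 0 < lam) (hy : 0 ≤ y)
    (hyB : y ≤ B) : ∃ k ≤ ⌊B / lam⌋₊, |y - k * lam| ≤ lam := by
  refine ⟨⌊y / lam⌋₊, Nat.floor_le_floor (div_le_div_of_nonneg_right hyB hlam.le), ?_⟩
  have hle : (⌊y / lam⌋₊ : ℝ) * lam ≤ y := (le_div_iff₀ hlam).mp (Nat.floor_le (by positivity))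
  have hlt : y < (⌊y / lam⌋₊ + 1 : ℝ) * lam := (div_lt_iff₀ hlam).mp (Nat.lt_floor_add_one _)
  rw [abs_le]
  constructor <;> linarith

theorem exists_net_of_monotoneOn_of_continuousOn {ℓ : ℝ → ℝ} {a b lam : ℝ} (hab : a ≤ b)
    (hlam : 0 < lam) (hmono : MonotoneOn ℓ (Icc a b)) (hcont : ContinuousOn ℓ (Icc a b)) :
    ∃ βs : Fin (⌊(ℓ b - ℓ a) / lam⌋₊ + 1) → ℝ,
      (∀ k, βs k ∈ Icc a b) ∧ ∀ β ∈ Icc a b, ∃ k, |ℓ β - ℓ (βs k)| ≤ lam := by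
  have hℓab : ℓ a ≤ ℓ b := hmono ⟨le_rfl, hab⟩ ⟨hab, le_rfl⟩ hab
  have hval : ∀ k : Fin (⌊(ℓ b - ℓ a) / lam⌋₊ + 1), ∃ β ∈ Icc a b, ℓ β = ℓ a + k * lam := by
    intro k
    have hk : (k : ℝ) * lam ≤ ℓ b - ℓ a :=
      (le_div_iff₀ hlam).mp ((Nat.le_floor_iff (div_nonneg (sub_nonneg.mpr hℓab) hlam.le)).mp
        (Nat.lt_succ_iff.mp k.2))
    exact intermediate_value_Icc hab hcont ⟨by simp only [le_add_iff_nonneg_right]; positivity,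
      by linarith⟩
  choose βs hβs hℓβs using hval
  refine ⟨βs, hβs, fun β hβ => ?_⟩
  have ha : ℓ a ≤ ℓ β := hmono ⟨le_rfl, hab⟩ hβ hβ.1
  have hb : ℓ β ≤ ℓ b := hmono hβ ⟨hab, le_rfl⟩ hβ.2
  obtain ⟨k, hk, hnear⟩ :=
    exists_le_floor_div_abs_sub_mul_le hlam (sub_nonneg.mpr ha) (sub_le_sub_right hb (ℓ a))
  refine ⟨⟨k, Nat.lt_succ_of_le hk⟩, ?_⟩
  rw [hℓβs, ← sub_sub]
  exact hnear

theorem exists_mem_Icc_forall_le_abs_sub {u v ρ : ℝ} (F : Finset ℝ) (hρ : 0 ≤ ρ)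
    (hF : 2 * ρ * F.card < v - u) : ∃ y ∈ Icc u v, ∀ z ∈ F, ρ ≤ |y - z| := by
  by_contra! hcover
  have hsub : Icc u v ⊆ ⋃ z ∈ F, Metric.ball z ρ := fun y hy => by
    obtain ⟨z, hz, hyz⟩ := hcover y hy
    exact mem_biUnion hz (by rwa [Metric.mem_ball, Real.dist_eq])
  have hvol : ENNReal.ofReal (v - u) ≤ ENNReal.ofReal (2 * ρ * F.card) :=
    calc ENNReal.ofReal (v - u) = volume (Icc u v) := Real.volume_Icc.symm
      _ ≤ ∑ z ∈ F, volume (Metric.ball z ρ) :=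
        (measure_mono hsub).trans (measure_biUnion_finset_le F _)
      _ = ENNReal.ofReal (2 * ρ * F.card) := by
        rw [sum_congr rfl fun z _ => Real.volume_ball z ρ, sum_const, nsmul_eq_mul,
          ENNReal.ofReal_mul (p := 2 * ρ) (by positivity), ENNReal.ofReal_natCast, mul_comm]
  rw [ENNReal.ofReal_le_ofReal_iff (by positivity)] at hvol
  linarith

theorem exists_mem_Icc_forall_le_abs_sub_of_continuousOn {ℓ : ℝ → ℝ} {a b T : ℝ}
    (F : Finset ℝ) (hab : a ≤ b) (hcont : ContinuousOn ℓ (Icc a b)) (hB : 0 < ℓ b - ℓ a)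
    (hF : F.card ≤ T) :
    ∃ β ∈ Icc a b, ∀ z ∈ F, (ℓ b - ℓ a) / (2 * (T + 1)) ≤ |ℓ β - z| := by
  have hT : 0 ≤ T := (Nat.cast_nonneg _).trans hF
  have hgap : 2 * ((ℓ b - ℓ a) / (2 * (T + 1))) * F.card < ℓ b - ℓ a := by
    rw [show 2 * ((ℓ b - ℓ a) / (2 * (T + 1))) * F.card = (ℓ b - ℓ a) * (F.card / (T + 1)) by
      field_simp]
    exact mul_lt_of_lt_one_right hB ((div_lt_one (by positivity)).mpr (by linarith))
  obtain ⟨y, hy, hyF⟩ := exists_mem_Icc_forall_le_abs_sub F (by positivity) hgap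
  obtain ⟨β, hβ, rfl⟩ := intermediate_value_Icc hab hcont hy
  exact ⟨β, hβ, hyF⟩

theorem eventually_div_rpow_lt_half_inv_floor_pow (A D lam γ : ℝ) (d : ℕ) (hD : 0 < D)
    (hlam : 0 < lam) (hdγ : (d : ℝ) < γ) :
    ∀ᶠ B in atTop, A / (B / D) ^ γ < 1 / 2 * (1 / (⌊B / lam⌋₊ + 1 : ℝ)) ^ d := by
  set c := 1 / lam + 1
  filter_upwards [eventually_ge_atTop 1,
    (tendsto_rpow_atTop (sub_pos.mpr hdγ)).eventually_gt_atTop (2 * A * D ^ γ * c ^ d)]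
    with B hB1 hBlarge
  have hB : 0 < B := one_pos.trans_le hB1
  have hfloor : (⌊B / lam⌋₊ + 1 : ℝ) ≤ c * B := by
    have := Nat.floor_le (div_nonneg hB.le hlam.le)
    have hc : c * B = B / lam + B := by simp only [c]; ring
    linarith
  have hsplit : (B / D) ^ γ = B ^ (γ - d) * B ^ d / D ^ γ := by
    rw [Real.div_rpow hB.le hD.le, ← Real.rpow_natCast, ← Real.rpow_add hB, sub_add_cancel]
  calc A / (B / D) ^ γ = A * D ^ γ / (B ^ (γ - d) * B ^ d) := by
        rw [hsplit, div_div_eq_mul_div]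
    _ < 1 / (2 * (c * B) ^ d) := by
        have hBd : 0 < B ^ d := by positivity
        rw [div_lt_div_iff₀ (by positivity) (by positivity), mul_pow]
        nlinarith
    _ ≤ 1 / 2 * (1 / (⌊B / lam⌋₊ + 1 : ℝ)) ^ d := by
        rw [_root_.one_div_pow, ← div_eq_mul_one_div, div_div]
        gcongr

end Real

section DesignBounds

open Set

variable {X : Type*} {m : ℕ} {f : X → ℝ → Fin m → ℝ} {ℓ : ℝ → ℝ} {ξopt : ℝ → Design X}
  {βmin βmax : ℝ}

theorem exists_design_det_ratio_ge [DecidableEq X] {lam : ℝ} (P : Finset X)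
    (hβ : βmin ≤ βmax) (hlam : 0 < lam) (hmono : MonotoneOn ℓ (Icc βmin βmax))
    (hcont : ContinuousOn ℓ (Icc βmin βmax))
    (hpos : ∀ β ∈ Icc βmin βmax, 0 < (infoMat f (ξopt β) β).det)
    (hnear : ∀ β ∈ Icc βmin βmax, ∀ b ∈ Icc βmin βmax, |ℓ β - ℓ b| ≤ lam →
      (1 : ℝ) / 2 ≤ (infoMat f (ξopt b) β).det / (infoMat f (ξopt β) β).det)
    (hcard : ∀ β ∈ Icc βmin βmax, (ξopt β).support.card = m)
    (hP : ∀ β ∈ Icc βmin βmax, P ⊆ (ξopt β).support)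
    (hPw : ∀ β ∈ Icc βmin βmax, ∀ b ∈ Icc βmin βmax, ∀ x ∈ P, (ξopt b).w x = (ξopt β).w x) :
    ∃ ζ : Design X, ∀ β ∈ Icc βmin βmax,
      1 / 2 * (1 / (⌊(ℓ βmax - ℓ βmin) / lam⌋₊ + 1 : ℝ)) ^ (m - P.card) ≤
        (infoMat f ζ β).det / (infoMat f (ξopt β) β).det := by
  obtain ⟨βs, hβs, hcover⟩ := exists_net_of_monotoneOn_of_continuousOn hβ hlam hmono hcont
  refine ⟨Design.avg fun k => ξopt (βs k), fun β hβ => ?_⟩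
  obtain ⟨k, hk⟩ := hcover β hβ
  have hD := hpos β hβ
  have havg := det_infoMat_avg_ge f (fun k => ξopt (βs k)) k P (hcard _ (hβs k)) (hP _ (hβs k))
    (fun x hx j => hPw _ (hβs k) _ (hβs j) x hx) β
  rw [Fintype.card_fin, Nat.cast_add_one] at havg
  have hhalf := (le_div_iff₀ hD).mp (hnear β hβ _ (hβs k) hk)
  rw [le_div_iff₀ hD, mul_right_comm, mul_comm]
  exact (mul_le_mul_of_nonneg_left hhalf (by positivity)).trans havg

theorem exists_det_ratio_le_of_card_support_le {N : ℕ} {c₀ c₁ γ : ℝ} (hβ : βmin ≤ βmax)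
    (hcont : ContinuousOn ℓ (Icc βmin βmax))
    (hpos : ∀ β ∈ Icc βmin βmax, 0 < (infoMat f (ξopt β) β).det)
    (hfar : ∀ β ∈ Icc βmin βmax, ∀ b ∈ Icc βmin βmax,
      ((infoMat f (ξopt b) β).det / (infoMat f (ξopt β) β).det) * |ℓ β - ℓ b| ^ γ ≤ c₁)
    (hI : ∀ xs : Fin m → X, ∃ b : Fin m → ℝ, (∀ j, b j ∈ Icc βmin βmax) ∧
      ∀ β ∈ Icc βmin βmax, detIm f xs β ≤ c₀ * ∑ j, (infoMat f (ξopt (b j)) β).det)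
    (hc₀ : 0 ≤ c₀) (hc₁ : 0 ≤ c₁) (hγ : 0 ≤ γ) (hB : 0 < ℓ βmax - ℓ βmin)
    (ξ : Design X) (hN : ξ.support.card ≤ N) :
    ∃ β ∈ Icc βmin βmax, (infoMat f ξ β).det / (infoMat f (ξopt β) β).det ≤
      c₀ * (N ^ m * m) * c₁ / ((ℓ βmax - ℓ βmin) / (2 * (N ^ m * m + 1))) ^ γ := by
  set ρ := (ℓ βmax - ℓ βmin) / (2 * (N ^ m * m + 1))
  have hρ : 0 < ρ := by positivity
  classical
  choose bs hbs hI using hI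
  set R := Fintype.piFinset fun _ : Fin m => ξ.support
  set F := R.biUnion fun r => univ.image fun j => ℓ (bs r j)
  have hR : (R.card : ℝ) ≤ N ^ m := by
    rw [Fintype.card_piFinset, prod_const, card_univ, Fintype.card_fin]
    exact_mod_cast Nat.pow_le_pow_left hN m
  have hF : (F.card : ℝ) ≤ N ^ m * m := by
    have hFR : F.card ≤ R.card * m :=
      card_biUnion_le.trans (sum_le_card_nsmul _ _ _ fun r _ =>
        card_image_le.trans_eq (card_fin m))
    calc (F.card : ℝ) ≤ R.card * m := by exact_mod_cast hFR
      _ ≤ N ^ m * m := by gcongr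
  obtain ⟨β, hβmem, hβF⟩ := exists_mem_Icc_forall_le_abs_sub_of_continuousOn F hβ hcont hB hF
  have hD := hpos β hβmem
  have hfar' : ∀ r ∈ R, ∀ j, (infoMat f (ξopt (bs r j)) β).det ≤
      c₁ / ρ ^ γ * (infoMat f (ξopt β) β).det := by
    intro r hr j
    have hρle : ρ ≤ |ℓ β - ℓ (bs r j)| :=
      hβF _ (mem_biUnion.mpr ⟨r, hr, mem_image_of_mem _ (mem_univ j)⟩)
    have hQ : (infoMat f (ξopt (bs r j)) β).det / (infoMat f (ξopt β) β).det * ρ ^ γ ≤ c₁ :=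
      (mul_le_mul_of_nonneg_left (Real.rpow_le_rpow hρ.le hρle hγ)
        (div_nonneg (det_infoMat_nonneg f _ β) hD.le)).trans (hfar β hβmem _ (hbs r j))
    exact (div_le_iff₀ hD).mp ((le_div_iff₀ (Real.rpow_pos_of_pos hρ γ)).mpr hQ)
  refine ⟨β, hβmem, (div_le_iff₀ hD).mpr ?_⟩
  calc (infoMat f ξ β).det ≤ ∑ r ∈ R, detIm f r β := det_infoMat_le_sum_detIm f ξ β
    _ ≤ ∑ r ∈ R, c₀ * ∑ j, (infoMat f (ξopt (bs r j)) β).det :=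
        sum_le_sum fun r _ => hI r β hβmem
    _ ≤ ∑ _r ∈ R, c₀ * ∑ _j : Fin m, c₁ / ρ ^ γ * (infoMat f (ξopt β) β).det := by
        gcongr with r hr j
        exact hfar' r hr j
    _ = R.card * m * (c₀ * c₁ / ρ ^ γ * (infoMat f (ξopt β) β).det) := by
        simp only [sum_const, card_univ, Fintype.card_fin, nsmul_eq_mul]
        ring
    _ ≤ N ^ m * m * (c₀ * c₁ / ρ ^ γ * (infoMat f (ξopt β) β).det) := by gcongr
    _ = _ := by ring

end DesignBounds

theorem maximin_minimal_support_points_unbounded_general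
    (m mη : ℕ) (hmη : mη < m) (N : ℕ) (c₀ c₁ lam γ : ℝ)
    (hc₀ : 0 < c₀) (hc₁ : 0 < c₁) (hlam : 0 < lam) (hγ : (m : ℝ) - (mη : ℝ) < γ) :
    ∃ B₀ : ℝ, 0 < B₀ ∧
      ∀ (X : Type) [Nonempty X] (βmin βmax : ℝ), βmin < βmax →
        ∀ (f : X → ℝ → Fin m → ℝ) (ℓ : ℝ → ℝ) (ξopt : ℝ → Design X),
          -- ℓ is a nondecreasing continuous scale function on ℬ
          MonotoneOn ℓ (Set.Icc βmin βmax) →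
          ContinuousOn ℓ (Set.Icc βmin βmax) →
          -- local D-optimality of the designs ξ[β], with nonsingular information matrix
          (∀ β ∈ Set.Icc βmin βmax, 0 < (infoMat f (ξopt β) β).det) →
          (∀ β ∈ Set.Icc βmin βmax, ∀ ξ : Design X,
              (infoMat f ξ β).det ≤ (infoMat f (ξopt β) β).det) →
          -- condition (2.4)/(3.1):  Q(β,β̃) ≤ c₁ |ℓ(β) − ℓ(β̃)|^(−γ)
          (∀ β ∈ Set.Icc βmin βmax, ∀ b ∈ Set.Icc βmin βmax,
              ((infoMat f (ξopt b) β).det / (infoMat f (ξopt β) β).det)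
                * |ℓ β - ℓ b| ^ γ ≤ c₁) →
          -- condition (2.5):  Q(β,β̃) ≥ 1/2 whenever |ℓ(β) − ℓ(β̃)| ≤ λ
          (∀ β ∈ Set.Icc βmin βmax, ∀ b ∈ Set.Icc βmin βmax,
              |ℓ β - ℓ b| ≤ lam →
              (1 : ℝ) / 2 ≤ (infoMat f (ξopt b) β).det / (infoMat f (ξopt β) β).det) →
          -- condition (2.9)
          (∀ xs : Fin m → X, ∃ b : Fin m → ℝ,
              (∀ j, b j ∈ Set.Icc βmin βmax) ∧
              ∀ β ∈ Set.Icc βmin βmax,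
                detIm f xs β ≤ c₀ * ∑ j, (infoMat f (ξopt (b j)) β).det) →
          -- every local D-optimal design is supported at exactly m points, each of weight 1/m
          (∀ β ∈ Set.Icc βmin βmax, (ξopt β).support.card = m) →
          (∀ β ∈ Set.Icc βmin βmax, ∀ x ∈ (ξopt β).support,
              (ξopt β).w x = 1 / (m : ℝ)) →
          -- there are mη fixed (distinct) points belonging to the support of every ξ[β]
          (∃ xbar : Fin mη → X, Function.Injective xbar ∧
              ∀ β ∈ Set.Icc βmin βmax, ∀ i, xbar i ∈ (ξopt β).support) →
          -- ℓ(β_max) − ℓ(β_min) sufficiently large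
          B₀ ≤ ℓ βmax - ℓ βmin →
          -- any maximizer of the standardized maximin criterion Φ
          ∀ ξstar : Design X,
            (∀ ξ : Design X,
              (⨅ β : Set.Icc βmin βmax,
                  (infoMat f ξ (β : ℝ)).det / (infoMat f (ξopt (β : ℝ)) (β : ℝ)).det) ≤
              (⨅ β : Set.Icc βmin βmax,
                  (infoMat f ξstar (β : ℝ)).det / (infoMat f (ξopt (β : ℝ)) (β : ℝ)).det)) →
            N < ξstar.support.card := by
  classical
  have hγd : ((m - mη : ℕ) : ℝ) < γ := by rwa [Nat.cast_sub hmη.le]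
  obtain ⟨B₁, hB₁⟩ := Filter.eventually_atTop.mp <| eventually_div_rpow_lt_half_inv_floor_pow
    (c₀ * (N ^ m * m) * c₁) (2 * (N ^ m * m + 1)) lam γ (m - mη) (by positivity) hlam hγd
  refine ⟨max B₁ 1, by positivity, ?_⟩
  intro X _ βmin βmax hβ f ℓ ξopt hmono hcont hpos _ hfar hnear hI hcard hw
    ⟨xbar, hxbar, hfixed⟩ hB ξstar hmax
  by_contra! hN
  set P := univ.image xbar
  have hPcard : P.card = mη := by
    rw [card_image_of_injective _ hxbar, card_univ, Fintype.card_fin]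
  have hP : ∀ β ∈ Set.Icc βmin βmax, P ⊆ (ξopt β).support := fun β hβ' =>
    image_subset_iff.mpr fun i _ => hfixed β hβ' i
  obtain ⟨ζ, hζ⟩ := exists_design_det_ratio_ge P hβ.le hlam hmono hcont hpos hnear hcard hP
    fun β hβ' b hb x hx => by rw [hw b hb x (hP b hb hx), hw β hβ' x (hP β hβ' hx)]
  obtain ⟨β, hβ', hup⟩ := exists_det_ratio_le_of_card_support_le hβ.le hcont hpos hfar hI hc₀.le
    hc₁.le ((Nat.cast_nonneg _).trans_lt hγd).le (one_pos.trans_le ((le_max_right _ _).trans hB))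
    ξstar hN
  have : Nonempty (Set.Icc βmin βmax) := ⟨⟨βmin, le_rfl, hβ.le⟩⟩
  have hlow := (le_ciInf fun b : Set.Icc βmin βmax => hζ b b.2).trans (hmax ζ)
  have hΦ := ciInf_le (f := fun b : Set.Icc βmin βmax =>
      (infoMat f ξstar b).det / (infoMat f (ξopt b) b).det)
    ⟨0, by rintro _ ⟨b, rfl⟩; exact div_nonneg (det_infoMat_nonneg f ξstar b) (hpos b b.2).le⟩
    ⟨β, hβ'⟩
  rw [hPcard] at hlow
  linarith [hB₁ _ ((le_max_left _ _).trans hB)]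

/-- For every `m ≥ 1`, `N`, and constants `c₀, c₁, λ > 0`, `γ > m`, there is `B₀ > 0` such
that for every design problem satisfying (2.4/3.1), (2.5) and (2.9), if
`ℓ(β_max) − ℓ(β_min) ≥ B₀` then any standardized maximin `D`-optimal design has more than
`N` support points. -/
theorem maximin_minimal_support_points_unbounded
    (m mη : ℕ) (hm : 1 ≤ m) (hmη : mη < m) (N : ℕ) (c₀ c₁ lam γ : ℝ)
    (hc₀ : 0 < c₀) (hc₁ : 0 < c₁) (hlam : 0 < lam) (hγ : (m : ℝ) - (mη : ℝ) < γ) :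
    ∃ B₀ : ℝ, 0 < B₀ ∧
      ∀ (X : Type) [Nonempty X] (βmin βmax : ℝ), βmin < βmax →
        ∀ (f : X → ℝ → Fin m → ℝ) (ℓ : ℝ → ℝ) (ξopt : ℝ → Design X),
          -- ℓ is a nondecreasing continuous scale function on ℬ
          MonotoneOn ℓ (Set.Icc βmin βmax) →
          ContinuousOn ℓ (Set.Icc βmin βmax) →
          -- local D-optimality of the designs ξ[β], with nonsingular information matrix
          (∀ β ∈ Set.Icc βmin βmax, 0 < (infoMat f (ξopt β) β).det) →
          (∀ β ∈ Set.Icc βmin βmax, ∀ ξ : Design X,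
              (infoMat f ξ β).det ≤ (infoMat f (ξopt β) β).det) →
          -- condition (2.4)/(3.1):  Q(β,β̃) ≤ c₁ |ℓ(β) − ℓ(β̃)|^(−γ)
          (∀ β ∈ Set.Icc βmin βmax, ∀ b ∈ Set.Icc βmin βmax,
              ((infoMat f (ξopt b) β).det / (infoMat f (ξopt β) β).det)
                * |ℓ β - ℓ b| ^ γ ≤ c₁) →
          -- condition (2.5):  Q(β,β̃) ≥ 1/2 whenever |ℓ(β) − ℓ(β̃)| ≤ λ
          (∀ β ∈ Set.Icc βmin βmax, ∀ b ∈ Set.Icc βmin βmax,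
              |ℓ β - ℓ b| ≤ lam →
              (1 : ℝ) / 2 ≤ (infoMat f (ξopt b) β).det / (infoMat f (ξopt β) β).det) →
          -- condition (2.9)
          (∀ xs : Fin m → X, ∃ b : Fin m → ℝ,
              (∀ j, b j ∈ Set.Icc βmin βmax) ∧
              ∀ β ∈ Set.Icc βmin βmax,
                detIm f xs β ≤ c₀ * ∑ j, (infoMat f (ξopt (b j)) β).det) →
          -- every local D-optimal design is supported at exactly m points, each of weight 1/m
          (∀ β ∈ Set.Icc βmin βmax, (ξopt β).support.card = m) →
          (∀ β ∈ Set.Icc βmin βmax, ∀ x ∈ (ξopt β).support,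
              (ξopt β).w x = 1 / (m : ℝ)) →
          -- there are mη fixed (distinct) points belonging to the support of every ξ[β]
          (∃ xbar : Fin mη → X, Function.Injective xbar ∧
              ∀ β ∈ Set.Icc βmin βmax, ∀ i, xbar i ∈ (ξopt β).support) →
          -- ℓ(β_max) − ℓ(β_min) sufficiently large
          B₀ ≤ ℓ βmax - ℓ βmin →
          -- any maximizer of the standardized maximin criterion Φ
          ∀ ξstar : Design X,
            (∀ ξ : Design X,
              (⨅ β : Set.Icc βmin βmax,
                  (infoMat f ξ (β : ℝ)).det / (infoMat f (ξopt (β : ℝ)) (β : ℝ)).det) ≤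
              (⨅ β : Set.Icc βmin βmax,
                  (infoMat f ξstar (β : ℝ)).det / (infoMat f (ξopt (β : ℝ)) (β : ℝ)).det)) →
            N < ξstar.support.card :=
  maximin_minimal_support_points_unbounded_general m mη hmη N c₀ c₁ lam γ hc₀ hc₁ hlam hγ
end

section
/- (Upper bound (A.1), one-parameter case.) Suppose the one-parameter design problem of the context satisfies: (i) for every x₀ ∈ 𝒳 there exists β̃ ∈ ℬ with I(x₀,β) ≤ c₀ M(ξ[β̃],β) for all β ∈ ℬ; and (ii) Q(β,β̃) ≤ c₁ |ℓ(β) − ℓ(β̃)|^{−γ} for all β, β̃ ∈ ℬ, with constants c₀, c₁, γ > 0. Let B = ℓ(β_max) − ℓ(β_min) > 0. Then every design ξ supported at at most N points satisfies Φ(ξ) = inf_{β∈ℬ} M(ξ,β)/M(ξ[β],β) ≤ c₀ c₁ (2(N+1)/B)^γ. -/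
open scoped BigOperators

/-- Information of a design in the one-parameter case: `M(ξ,β) = ∑ₖ wₖ I(xₖ,β)`. -/
noncomputable def info {X : Type*} (I : X → ℝ → ℝ) (ξ : Design X) (β : ℝ) : ℝ :=
  ∑ x ∈ ξ.support, ξ.w x * I x β

/-!
Let `b(x)` be the parameter that condition (i) attaches to a support point `x` of `ξ`. The at most
`N` values `ℓ(b(x))` cannot come within `B / (2(N+1))` of all `N + 1` midpoints of the equal
subintervals of `[ℓ(β_min), ℓ(β_max)]`, so some midpoint `t` keeps that distance from all of them;
by continuity `t = ℓ(β*)`. At `β*` condition (ii) gives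
`I(x, β*) ≤ c₀ M(ξ[b(x)], β*) ≤ c₀ c₁ (2(N+1)/B)^γ M(ξ[β*], β*)` for every support point,
and averaging over the weights of `ξ` bounds the efficiency of `ξ` at `β*`.
-/

open Finset

theorem exists_forall_half_le_dist_of_card_lt {α ι : Type*} [PseudoMetricSpace α] [Fintype ι]
    {p : ι → α} {d : ℝ} (hp : Pairwise fun i j => d ≤ dist (p i) (p j))
    {T : Finset α} (hT : #T < Fintype.card ι) :
    ∃ i, ∀ s ∈ T, d / 2 ≤ dist (p i) s := by
  by_contra! hclose
  choose f hfT hf using hclose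
  obtain ⟨i, -, j, -, hij, hfij⟩ :=
    exists_ne_map_eq_of_card_lt_of_maps_to (s := univ) (by simpa using hT) (fun i _ => hfT i)
  have htri := dist_triangle_right (p i) (p j) (f i)
  have hj := hf j
  rw [← hfij] at hj
  linarith [hp hij, hf i]

theorem exists_mem_Icc_forall_le_abs_sub_s3 {a b : ℝ} (hab : a ≤ b) {N : ℕ} {T : Finset ℝ}
    (hT : #T ≤ N) : ∃ t ∈ Set.Icc a b, ∀ s ∈ T, (b - a) / (2 * (N + 1)) ≤ |t - s| := by
  set d := (b - a) / (N + 1) with hd_def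
  have hd : 0 ≤ d := div_nonneg (sub_nonneg.2 hab) (by positivity)
  let p : Fin (N + 1) → ℝ := fun i => a + (i + 1 / 2) * d
  have hp : Pairwise fun i j => d ≤ dist (p i) (p j) := by
    intro i j hij
    have hij' : (1 : ℝ) ≤ |(i : ℝ) - j| := by
      exact_mod_cast Int.one_le_abs (sub_ne_zero.2 (Int.ofNat_inj.not.2 (Fin.val_ne_of_ne hij)))
    rw [Real.dist_eq, show p i - p j = (i - j) * d by ring, abs_mul, abs_of_nonneg hd]
    nlinarith
  obtain ⟨i, hi⟩ := exists_forall_half_le_dist_of_card_lt hp (by simpa using Nat.lt_succ_of_le hT)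
  have hiN : (i : ℝ) + 1 / 2 ≤ N + 1 := by
    have : (i : ℝ) ≤ N := by exact_mod_cast Nat.le_of_lt_succ i.2
    linarith
  have hlen : (N + 1) * d = b - a := by rw [hd_def]; field_simp
  refine ⟨p i, ⟨?_, ?_⟩, fun s hs => ?_⟩
  · have : 0 ≤ ((i : ℝ) + 1 / 2) * d := by positivity
    simp only [p]
    linarith
  · simp only [p]
    nlinarith
  · rw [show (b - a) / (2 * (N + 1)) = d / 2 by rw [hd_def]; field_simp]
    exact hi s hs

theorem le_mul_inv_rpow_of_mul_rpow_le {q r δ c γ : ℝ} (hq : 0 ≤ q) (hδ : 0 < δ) (hδr : δ ≤ r)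
    (hγ : 0 ≤ γ) (h : q * r ^ γ ≤ c) : q ≤ c * δ⁻¹ ^ γ := by
  rw [Real.inv_rpow hδ.le, ← div_eq_mul_inv, le_div_iff₀ (by positivity)]
  exact (mul_le_mul_of_nonneg_left (Real.rpow_le_rpow hδ.le hδr hγ) hq).trans h

section Design

variable {X : Type*} {I : X → ℝ → ℝ} {ξ : Design X} {β : ℝ}

theorem info_nonneg (h : ∀ x ∈ ξ.support, 0 ≤ I x β) : 0 ≤ info I ξ β :=
  sum_nonneg fun x hx => mul_nonneg (ξ.w_pos x hx).le (h x hx)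

theorem info_le_of_forall_le {C : ℝ} (h : ∀ x ∈ ξ.support, I x β ≤ C) : info I ξ β ≤ C :=
  calc info I ξ β ≤ ∑ x ∈ ξ.support, ξ.w x * C :=
        sum_le_sum fun x hx => mul_le_mul_of_nonneg_left (h x hx) (ξ.w_pos x hx).le
    _ = C := by rw [← sum_mul, ξ.sum_one, one_mul]

end Design

theorem maximin_upper_bound_one_dim_general
    (X : Type*) (βmin βmax : ℝ) (hββ : βmin < βmax)
    (I : X → ℝ → ℝ) (hI : ∀ x : X, ∀ β ∈ Set.Icc βmin βmax, 0 ≤ I x β)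
    (ℓ : ℝ → ℝ)
    (hcont : ContinuousOn ℓ (Set.Icc βmin βmax))
    (ξopt : ℝ → Design X)
    (hpos : ∀ β ∈ Set.Icc βmin βmax, 0 < info I (ξopt β) β)
    (c₀ c₁ γ : ℝ) (hc₀ : 0 < c₀) (hγ : 0 < γ)
    -- condition (i) = (2.9) for m = 1
    (h29 : ∀ x₀ : X, ∃ b ∈ Set.Icc βmin βmax,
        ∀ β ∈ Set.Icc βmin βmax, I x₀ β ≤ c₀ * info I (ξopt b) β)
    -- condition (ii) = (2.4)/(3.1):  Q(β,β̃) ≤ c₁ |ℓ(β) − ℓ(β̃)|^(−γ)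
    (h24 : ∀ β ∈ Set.Icc βmin βmax, ∀ b ∈ Set.Icc βmin βmax,
        (info I (ξopt b) β / info I (ξopt β) β) * |ℓ β - ℓ b| ^ γ ≤ c₁)
    (B : ℝ) (hB : B = ℓ βmax - ℓ βmin) (hBpos : 0 < B)
    (N : ℕ) (ξ : Design X) (hcard : ξ.support.card ≤ N) :
    (⨅ β : Set.Icc βmin βmax, info I ξ (β : ℝ) / info I (ξopt (β : ℝ)) (β : ℝ))
      ≤ c₀ * c₁ * (2 * ((N : ℝ) + 1) / B) ^ γ := by
  choose b hb hIb using h29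
  obtain ⟨_, ht, hfar⟩ := exists_mem_Icc_forall_le_abs_sub_s3 (by linarith : ℓ βmin ≤ ℓ βmax)
    (T := ξ.support.image (ℓ ∘ b)) (card_image_le.trans hcard)
  obtain ⟨βs, hβs, rfl⟩ := intermediate_value_Icc hββ.le hcont ht
  have hδ : 0 < (ℓ βmax - ℓ βmin) / (2 * (N + 1)) := by rw [← hB]; positivity
  have hsupp : ∀ x ∈ ξ.support,
      I x βs ≤ c₀ * c₁ * (2 * ((N : ℝ) + 1) / B) ^ γ * info I (ξopt βs) βs := by
    intro x hx
    have hQ := le_mul_inv_rpow_of_mul_rpow_le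
      (div_nonneg (info_nonneg fun y _ => hI y βs hβs) (hpos βs hβs).le) hδ
      (hfar _ (mem_image_of_mem _ hx)) hγ.le (h24 βs hβs (b x) (hb x))
    rw [inv_div, ← hB, div_le_iff₀ (hpos βs hβs)] at hQ
    calc I x βs ≤ c₀ * info I (ξopt (b x)) βs := hIb x βs hβs
      _ ≤ c₀ * (c₁ * (2 * ((N : ℝ) + 1) / B) ^ γ * info I (ξopt βs) βs) :=
          mul_le_mul_of_nonneg_left hQ hc₀.le
      _ = _ := by ring
  refine (ciInf_le ⟨0, ?_⟩ ⟨βs, hβs⟩).trans ?_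
  · rintro _ ⟨β, rfl⟩
    exact div_nonneg (info_nonneg fun y _ => hI y β β.2) (hpos β β.2).le
  · rw [div_le_iff₀ (hpos βs hβs)]
    exact info_le_of_forall_le hsupp

/-- Upper bound (A.1) in the one-parameter case: under conditions (2.9) and (2.4)/(3.1),
every design supported at at most `N` points satisfies
`Φ(ξ) ≤ c₀ c₁ (2(N+1)/B)^γ` where `B = ℓ(β_max) − ℓ(β_min)`. -/
theorem maximin_upper_bound_one_dim
    (X : Type*) [Nonempty X] (βmin βmax : ℝ) (hββ : βmin < βmax)
    (I : X → ℝ → ℝ) (hI : ∀ x : X, ∀ β ∈ Set.Icc βmin βmax, 0 ≤ I x β)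
    (ℓ : ℝ → ℝ)
    (hmono : MonotoneOn ℓ (Set.Icc βmin βmax))
    (hcont : ContinuousOn ℓ (Set.Icc βmin βmax))
    (ξopt : ℝ → Design X)
    (hpos : ∀ β ∈ Set.Icc βmin βmax, 0 < info I (ξopt β) β)
    (hopt : ∀ β ∈ Set.Icc βmin βmax, ∀ ξ : Design X, info I ξ β ≤ info I (ξopt β) β)
    (c₀ c₁ γ : ℝ) (hc₀ : 0 < c₀) (hc₁ : 0 < c₁) (hγ : 0 < γ)
    -- condition (i) = (2.9) for m = 1
    (h29 : ∀ x₀ : X, ∃ b ∈ Set.Icc βmin βmax,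
        ∀ β ∈ Set.Icc βmin βmax, I x₀ β ≤ c₀ * info I (ξopt b) β)
    -- condition (ii) = (2.4)/(3.1):  Q(β,β̃) ≤ c₁ |ℓ(β) − ℓ(β̃)|^(−γ)
    (h24 : ∀ β ∈ Set.Icc βmin βmax, ∀ b ∈ Set.Icc βmin βmax,
        (info I (ξopt b) β / info I (ξopt β) β) * |ℓ β - ℓ b| ^ γ ≤ c₁)
    (B : ℝ) (hB : B = ℓ βmax - ℓ βmin) (hBpos : 0 < B)
    (N : ℕ) (ξ : Design X) (hcard : ξ.support.card ≤ N) :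
    (⨅ β : Set.Icc βmin βmax, info I ξ (β : ℝ) / info I (ξopt (β : ℝ)) (β : ℝ))
      ≤ c₀ * c₁ * (2 * ((N : ℝ) + 1) / B) ^ γ :=
  maximin_upper_bound_one_dim_general X βmin βmax hββ I hI ℓ hcont ξopt hpos c₀ c₁ γ hc₀ hγ h29 h24
    B hB hBpos N ξ hcard
end

section
/- (Bayesian lower bound, one-parameter case.) Suppose the one-parameter design problem of the context satisfies Q(β,β̃) ≥ 1/2 whenever |ℓ(β) − ℓ(β̃)| ≤ λ, for some λ > 0, and that B = ℓ(β_max) − ℓ(β_min) ≥ 4λ. Then for every Borel probability measure π on ℬ there exists a design ξ (an equal-weight mixture of n = ⌈B/(2λ)⌉ local D-optimal designs) such that Ψ_st(ξ) = ∫_ℬ log( M(ξ,β)/M(ξ[β],β) ) dπ(β) ≥ −log(2⌈B/(2λ)⌉) ≥ log(λ/(2B)). -/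
open scoped BigOperators ENNReal

set_option maxHeartbeats 1000000

/-- `negLog r` is `−log r` as an extended nonnegative real, with value `∞` for `r ≤ 0`.
For an efficiency ratio `r ∈ [0,1]` this encodes the (possibly infinite) Bayesian loss
`−log r`; the criterion `Ψ_st(ξ) = ∫ log r dπ` (value `−∞` allowed) equals
`−∫⁻ negLog r dπ`, so `Ψ_st(ξ) ≥ −log(2n)` is `∫⁻ negLog r dπ ≤ ENNReal.ofReal (log (2n))`. -/
noncomputable def negLog (r : ℝ) : ℝ≥0∞ :=
  if r ≤ 0 then ⊤ else ENNReal.ofReal (-Real.log r)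

lemma Design.w_nonneg_s8 {X : Type*} (ξ : Design X) (x : X) : 0 ≤ ξ.w x := by
  by_cases h : x ∈ ξ.support
  · exact (ξ.w_pos x h).le
  · exact le_of_eq (ξ.w_zero x h).symm

noncomputable def mixSupport {X : Type*} (n : ℕ) (D : ℕ → Design X) : Finset X :=
  letI : DecidableEq X := Classical.decEq X
  (Finset.range n).biUnion fun j => (D j).support

lemma mem_mixSupport {X : Type*} {n : ℕ} {D : ℕ → Design X} {x : X} :
    x ∈ mixSupport n D ↔ ∃ j ∈ Finset.range n, x ∈ (D j).support := by
  letI : DecidableEq X := Classical.decEq X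
  simp [mixSupport]

lemma sum_mixSupport {X : Type*} {n : ℕ} {D : ℕ → Design X} {j : ℕ}
    (hj : j ∈ Finset.range n) (f : X → ℝ) (hf : ∀ x ∉ (D j).support, (D j).w x * f x = 0) :
    ∑ x ∈ mixSupport n D, (D j).w x * f x = ∑ x ∈ (D j).support, (D j).w x * f x := by
  apply (Finset.sum_subset _ _).symm
  · intro x hxj
    exact mem_mixSupport.2 ⟨j, hj, hxj⟩
  · intro x _ hxj
    exact hf x hxj

noncomputable def mixDesign {X : Type*} (n : ℕ) (hn : 0 < n) (D : ℕ → Design X) :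
    Design X where
  support := mixSupport n D
  w := fun x => (∑ j ∈ Finset.range n, (D j).w x) / n
  w_pos := by
    intro x hx
    rcases mem_mixSupport.1 hx with ⟨j, hj, hxj⟩
    apply div_pos _ (by exact_mod_cast hn)
    have h1 : 0 < (D j).w x := (D j).w_pos x hxj
    have hle : (D j).w x ≤ ∑ j' ∈ Finset.range n, (D j').w x :=
      Finset.single_le_sum (fun j' _ => (D j').w_nonneg_s8 x) hj
    linarith
  w_zero := by
    intro x hx
    have h : ∀ j ∈ Finset.range n, (D j).w x = 0 := by
      intro j hj
      exact (D j).w_zero x fun hxj => hx (mem_mixSupport.2 ⟨j, hj, hxj⟩)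
    simp only [Finset.sum_eq_zero h, zero_div]
  sum_one := by
    rw [← Finset.sum_div, Finset.sum_comm]
    have h : ∀ j ∈ Finset.range n, (∑ x ∈ mixSupport n D, (D j).w x) = 1 := by
      intro j hj
      have := sum_mixSupport hj (fun _ => 1) (fun x hx => by
        rw [(D j).w_zero x hx, zero_mul])
      simp only [mul_one] at this
      rw [this, (D j).sum_one]
    rw [Finset.sum_congr rfl h, Finset.sum_const, Finset.card_range, nsmul_eq_mul,
      mul_one, div_self (by exact_mod_cast hn.ne')]

lemma info_mixDesign {X : Type*} (I : X → ℝ → ℝ) (n : ℕ) (hn : 0 < n) (D : ℕ → Design X)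
    (β : ℝ) :
    info I (mixDesign n hn D) β = (∑ j ∈ Finset.range n, info I (D j) β) / n := by
  unfold info mixDesign
  simp only
  have : ∀ x ∈ mixSupport n D,
      (∑ j ∈ Finset.range n, (D j).w x) / (n : ℝ) * I x β
        = (∑ j ∈ Finset.range n, (D j).w x * I x β) / n := by
    intro x _
    rw [div_mul_eq_mul_div, Finset.sum_mul]
  rw [Finset.sum_congr rfl this, ← Finset.sum_div, Finset.sum_comm]
  congr 1
  apply Finset.sum_congr rfl
  intro j hj
  exact sum_mixSupport hj (fun x => I x β) (fun x hx => by rw [(D j).w_zero x hx, zero_mul])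

/-- Bayesian lower bound in the one-parameter case: under condition (2.5), if
`B = ℓ(β_max) − ℓ(β_min) ≥ 4λ` and `n = ⌈B/(2λ)⌉`, then for every Borel probability
measure `π` on `ℬ` there is a design `ξ` with
`Ψ_st(ξ) ≥ −log(2n) ≥ log(λ/(2B))`. -/
theorem bayesian_lower_bound_one_dim
    (X : Type*) [Nonempty X] (βmin βmax : ℝ) (hββ : βmin < βmax)
    (I : X → ℝ → ℝ) (hI : ∀ x : X, ∀ β ∈ Set.Icc βmin βmax, 0 ≤ I x β)
    (hIcont : ∀ x : X, Continuous (I x))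
    (ℓ : ℝ → ℝ)
    (hmono : MonotoneOn ℓ (Set.Icc βmin βmax))
    (hcont : ContinuousOn ℓ (Set.Icc βmin βmax))
    (ξopt : ℝ → Design X)
    (hmeas : Measurable (fun β : ℝ => info I (ξopt β) β))
    (hpos : ∀ β ∈ Set.Icc βmin βmax, 0 < info I (ξopt β) β)
    (hopt : ∀ β ∈ Set.Icc βmin βmax, ∀ ξ : Design X, info I ξ β ≤ info I (ξopt β) β)
    (lam : ℝ) (hlam : 0 < lam)
    -- condition (2.5):  Q(β,β̃) ≥ 1/2 whenever |ℓ(β) − ℓ(β̃)| ≤ λ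
    (h25 : ∀ β ∈ Set.Icc βmin βmax, ∀ b ∈ Set.Icc βmin βmax,
        |ℓ β - ℓ b| ≤ lam →
        (1 : ℝ) / 2 ≤ info I (ξopt b) β / info I (ξopt β) β)
    (B : ℝ) (hB : B = ℓ βmax - ℓ βmin) (hB4 : 4 * lam ≤ B)
    (n : ℕ) (hn : n = ⌈B / (2 * lam)⌉₊)
    (π : MeasureTheory.Measure ℝ) [MeasureTheory.IsProbabilityMeasure π]
    (hπsupp : π (Set.Icc βmin βmax) = 1) :
    ∃ ξ : Design X,
      (∫⁻ β in Set.Icc βmin βmax,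
          negLog (info I ξ β / info I (ξopt β) β) ∂π)
        ≤ ENNReal.ofReal (Real.log (2 * (n : ℝ))) ∧
      Real.log (lam / (2 * B)) ≤ -Real.log (2 * (n : ℝ)) := by
  have hIcc : βmin ≤ βmax := hββ.le
  have hminmem : βmin ∈ Set.Icc βmin βmax := ⟨le_refl _, hIcc⟩
  have hmaxmem : βmax ∈ Set.Icc βmin βmax := ⟨hIcc, le_refl _⟩
  have hBpos : 0 < B := lt_of_lt_of_le (by linarith) hB4
  have hnpos : 0 < n := by
    rw [hn]; exact Nat.ceil_pos.2 (by positivity)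
  have hnR : (0:ℝ) < n := by exact_mod_cast hnpos
  have hceil : B / (2*lam) ≤ n := by rw [hn]; exact Nat.le_ceil _
  have hnle : (n:ℝ) ≤ B / lam := by
    have h1 : (n:ℝ) < B/(2*lam) + 1 := by
      rw [hn]; exact Nat.ceil_lt_add_one (by positivity)
    have h2 : (1:ℝ) ≤ B/(2*lam) := by
      rw [le_div_iff₀ (by positivity)]; linarith
    have h3 : B/(2*lam) + B/(2*lam) = B/lam := by field_simp; ring
    linarith
  have hlmono : ℓ βmin ≤ ℓ βmax := hmono hminmem hmaxmem hIcc
  set c : ℕ → ℝ := fun j => min (ℓ βmin + (2*(j:ℝ)+1)*lam) (ℓ βmax) with hc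
  have hb : ∀ j : ℕ, ∃ b ∈ Set.Icc βmin βmax, ℓ b = c j := by
    intro j
    have hcm : c j ∈ Set.Icc (ℓ βmin) (ℓ βmax) := by
      constructor
      · apply le_min _ hlmono
        have hj0 : (0:ℝ) ≤ (j:ℝ) := Nat.cast_nonneg j
        nlinarith
      · exact min_le_right _ _
    rcases intermediate_value_Icc hIcc hcont hcm with ⟨b, hb1, hb2⟩
    exact ⟨b, hb1, hb2⟩
  choose bp hbp hbl using hb
  -- coverage
  have hcover : ∀ β ∈ Set.Icc βmin βmax, ∃ j ∈ Finset.range n, |ℓ β - c j| ≤ lam := by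
    intro β hβ
    set t := ℓ β with ht
    have ht1 : ℓ βmin ≤ t := hmono hminmem hβ hβ.1
    have ht2 : t ≤ ℓ βmax := hmono hβ hmaxmem hβ.2
    set s : ℝ := (t - ℓ βmin) / (2*lam) with hs
    have hs0 : 0 ≤ s := by apply div_nonneg (by linarith) (by positivity)
    have hsB : s ≤ B/(2*lam) := by
      have h : t - ℓ βmin ≤ B := by rw [hB]; linarith
      rw [hs]
      gcongr
    set j : ℕ := min ⌊s⌋₊ (n-1) with hj
    have hjn : j ∈ Finset.range n := by
      apply Finset.mem_range.2
      calc j ≤ n - 1 := min_le_right _ _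
        _ < n := Nat.sub_lt hnpos one_pos
    refine ⟨j, hjn, ?_⟩
    have hlow : (j:ℝ) ≤ s := by
      calc (j:ℝ) ≤ (⌊s⌋₊ : ℝ) := by exact_mod_cast min_le_left _ _
        _ ≤ s := Nat.floor_le hs0
    have hup : s ≤ (j:ℝ) + 1 := by
      rcases le_or_gt ⌊s⌋₊ (n-1) with h | h
      · have : j = ⌊s⌋₊ := min_eq_left h
        rw [this]
        exact (Nat.lt_floor_add_one s).le
      · have hje : j = n - 1 := min_eq_right h.le
        have hj1 : (j:ℝ) + 1 = n := by
          rw [hje]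
          have : n - 1 + 1 = n := Nat.succ_pred_eq_of_pos hnpos
          exact_mod_cast congrArg (Nat.cast (R := ℝ)) this
        rw [hj1]
        exact hsB.trans hceil
    -- 2jλ ≤ t - ℓβmin ≤ 2(j+1)λ
    have h2l : 2*(j:ℝ)*lam ≤ t - ℓ βmin := by
      have := mul_le_mul_of_nonneg_right hlow (le_of_lt (by positivity : (0:ℝ) < 2*lam))
      rw [hs, div_mul_cancel₀ _ (by positivity : (2*lam) ≠ 0)] at this
      nlinarith
    have h2u : t - ℓ βmin ≤ 2*((j:ℝ)+1)*lam := by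
      have := mul_le_mul_of_nonneg_right hup (le_of_lt (by positivity : (0:ℝ) < 2*lam))
      rw [hs, div_mul_cancel₀ _ (by positivity : (2*lam) ≠ 0)] at this
      nlinarith
    rcases le_or_gt (ℓ βmin + (2*(j:ℝ)+1)*lam) (ℓ βmax) with h | h
    · have : c j = ℓ βmin + (2*(j:ℝ)+1)*lam := min_eq_left h
      rw [this, abs_le]; constructor <;> nlinarith
    · have : c j = ℓ βmax := min_eq_right h.le
      rw [this, abs_le]; constructor <;> nlinarith
  -- the design
  set D : ℕ → Design X := fun j => ξopt (bp j) with hD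
  refine ⟨mixDesign n hnpos D, ?_, ?_⟩
  · -- pointwise bound on the ratio
    have hratio : ∀ β ∈ Set.Icc βmin βmax,
        1 / (2*(n:ℝ)) ≤ info I (mixDesign n hnpos D) β / info I (ξopt β) β := by
      intro β hβ
      obtain ⟨j, hjn, habs⟩ := hcover β hβ
      have hM : 0 < info I (ξopt β) β := hpos β hβ
      have h25' : (1:ℝ)/2 ≤ info I (ξopt (bp j)) β / info I (ξopt β) β :=
        h25 β hβ (bp j) (hbp j) (by rw [hbl j]; exact habs)
      have hAj : info I (ξopt β) β / 2 ≤ info I (D j) β := by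
        have h := (le_div_iff₀ hM).mp h25'
        show info I (ξopt β) β / 2 ≤ info I (ξopt (bp j)) β
        linarith
      have hnn : ∀ j' ∈ Finset.range n, 0 ≤ info I (D j') β := by
        intro j' _
        apply Finset.sum_nonneg
        intro x _
        exact mul_nonneg ((D j').w_nonneg_s8 x) (hI x β hβ)
      have hsum : info I (D j) β ≤ ∑ j' ∈ Finset.range n, info I (D j') β :=
        Finset.single_le_sum hnn hjn
      have hMS : info I (ξopt β) β / 2 ≤ ∑ j' ∈ Finset.range n, info I (D j') β :=
        le_trans hAj hsum
      rw [info_mixDesign, le_div_iff₀ hM]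
      calc 1/(2*(n:ℝ)) * info I (ξopt β) β
          = (info I (ξopt β) β / 2) * ((n:ℝ))⁻¹ := by ring
        _ ≤ (∑ j' ∈ Finset.range n, info I (D j') β) * ((n:ℝ))⁻¹ := by gcongr
        _ = (∑ j' ∈ Finset.range n, info I (D j') β) / n := by rw [div_eq_mul_inv]
    have hpt : ∀ β ∈ Set.Icc βmin βmax,
        negLog (info I (mixDesign n hnpos D) β / info I (ξopt β) β)
          ≤ ENNReal.ofReal (Real.log (2*(n:ℝ))) := by
      intro β hβ
      have hr := hratio β hβ
      set r := info I (mixDesign n hnpos D) β / info I (ξopt β) β with hrdef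
      have hrpos : 0 < r := lt_of_lt_of_le (by positivity) hr
      rw [negLog, if_neg (not_le.2 hrpos)]
      apply ENNReal.ofReal_le_ofReal
      rw [← Real.log_inv]
      apply Real.log_le_log (by positivity)
      have h1 : r⁻¹ ≤ (1/(2*(n:ℝ)))⁻¹ := by
        apply inv_anti₀ (by positivity) hr
      rwa [one_div, inv_inv] at h1
    calc (∫⁻ β in Set.Icc βmin βmax,
            negLog (info I (mixDesign n hnpos D) β / info I (ξopt β) β) ∂π)
        ≤ ∫⁻ _ in Set.Icc βmin βmax, ENNReal.ofReal (Real.log (2*(n:ℝ))) ∂π :=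
          MeasureTheory.setLIntegral_mono' measurableSet_Icc hpt
      _ = ENNReal.ofReal (Real.log (2*(n:ℝ))) * π (Set.Icc βmin βmax) := by
          rw [MeasureTheory.setLIntegral_const]
      _ = ENNReal.ofReal (Real.log (2*(n:ℝ))) := by rw [hπsupp, mul_one]
  · -- the purely real inequality
    have h2n : (0:ℝ) < 2*(n:ℝ) := by positivity
    have key : Real.log (2*(n:ℝ)) ≤ Real.log (2*B/lam) := by
      apply Real.log_le_log h2n
      rw [mul_div_assoc]
      linarith
    have heq : lam / (2*B) = (2*B/lam)⁻¹ := by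
      field_simp
    rw [heq, Real.log_inv]
    linarith
end
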